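/- Long exact sequence: Let F be a functor from the category BanAlg of Banach algebras and continuous homomorphisms into an abelian category, and assume F is homotopy invariant and half-exact for semi-split extensions. Then for every semi-split extension B ↣^i D ↠^π A of Banach algebras, the sequence F(ΣB) →^{F(Σi)} F(ΣD) →^{F(Σπ)} F(ΣA) →^{∂} F(B) →^{F(i)} F(D) →^{F(π)} F(A) is exact, where the connecting morphism ∂ is F(κ_π)⁻¹ ∘ F(ι(π)) (here F(κ_π) : F(B) → F(C_π) is an isomorphism, ι(π) : ΣA → C_π, f ↦ (f, 0), and κ_π : B → C_π, b ↦ (0, i(b))). -/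

import Mathlib

/-!
Everything rests on excision: if `B ↣κ E ↠ Q` is a semi-split extension with `Q` contractible,
then `F(κ)` is an isomorphism. It is epi by half-exactness, as `F(Q) = 0`. For mono, factor `κ`
through the mapping path space `P_κ = {(c, b) : c(0) = κ(b)}`, which retracts onto `B` by shrinking
paths. Evaluation at `1` maps `P_κ` onto `E` with kernel the mapping cone `C_κ`, a linear section
being built from a contraction of `Q`; and `C_κ` is itself an extension of `ΣQ` by `CB`, both
contractible, so `F(C_κ) = 0` and `F(P_κ) → F(E)` is mono.

Applied to `B ↣ C_π ↠ CA` this makes `F(κ_π)` invertible. Exactness at `F(B)` is then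
half-exactness of `ΣA ↣ C_π ↠ D` transported along `F(κ_π)`, and exactness at `F(ΣA)` is
half-exactness of `ΣD ↣ C_ε ↠ C_π` (for `ε : C_π → D`), transported along `F(κ_ε)` and the
rotation homotopy `ι(ε) ≃ κ(ε) ∘ Σπ ∘ (reversal)`.
-/

set_option linter.unusedSectionVars false
noncomputable section
open scoped unitInterval

section Vanish
variable (X : Type) [TopologicalSpace X] (A : Type) [NonUnitalNormedRing A] [NormedSpace ℂ A]
  [IsScalarTower ℂ A A] [SMulCommClass ℂ A A]

/-- The subalgebra of continuous functions vanishing on `Y`. -/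
def vanishAlg (Y : Set X) : NonUnitalSubalgebra ℂ C(X, A) where
  carrier := {f | ∀ y ∈ Y, f y = 0}
  add_mem' hf hg y hy := by simp [hf y hy, hg y hy]
  zero_mem' y hy := rfl
  mul_mem' hf hg y hy := by simp [hg y hy]
  smul_mem' c f hf y hy := by simp [hf y hy]

variable {X A}

@[simp] lemma mem_vanishAlg {Y : Set X} {f : C(X, A)} :
    f ∈ vanishAlg X A Y ↔ ∀ y ∈ Y, f y = 0 := Iff.rfl

lemma isClosed_vanishAlg (Y : Set X) : IsClosed ((vanishAlg X A Y : Set C(X, A))) := by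
  have : (vanishAlg X A Y : Set C(X, A)) = ⋂ y ∈ Y, {f : C(X, A) | f y = 0} := by
    ext f; simp [Set.mem_iInter]
  rw [this]
  exact isClosed_biInter fun y _ =>
    isClosed_eq (continuous_eval_const y) continuous_const

end Vanish

section Susp
variable (A : Type) [NonUnitalNormedRing A] [NormedSpace ℂ A] [IsScalarTower ℂ A A] [SMulCommClass ℂ A A]

/-- `ΣA`, the suspension of `A`: continuous functions on `[0,1]` vanishing at both endpoints. -/
def suspAlg : NonUnitalSubalgebra ℂ C(unitInterval, A) := vanishAlg unitInterval A {0, 1}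

variable {A} {B : Type} [NonUnitalNormedRing B] [NormedSpace ℂ B] [IsScalarTower ℂ B B] [SMulCommClass ℂ B B]

lemma susp_apply_zero (f : suspAlg A) : f.1 0 = 0 := f.2 0 (Set.mem_insert _ _)
lemma susp_apply_one (f : suspAlg A) : f.1 1 = 0 := f.2 1 (Set.mem_insert_of_mem _ rfl)

/-- Postcomposition with a continuous homomorphism. -/
def postcompHom (φ : A →ₙₐ[ℂ] B) (hφ : Continuous φ) :
    C(unitInterval, A) →ₙₐ[ℂ] C(unitInterval, B) where
  toFun f := (⟨⇑φ, hφ⟩ : C(A, B)).comp f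
  map_smul' c f := by ext t; simp
  map_zero' := by ext t; simp
  map_add' f g := by ext t; simp
  map_mul' f g := by ext t; simp

@[simp] lemma postcompHom_apply (φ : A →ₙₐ[ℂ] B) (hφ : Continuous φ) (f : C(unitInterval, A))
    (t : unitInterval) : postcompHom φ hφ f t = φ (f t) := rfl

/-- `Σφ`, the suspension of a continuous homomorphism `φ`. -/
def suspMap (φ : A →ₙₐ[ℂ] B) (hφ : Continuous φ) : suspAlg A →ₙₐ[ℂ] suspAlg B where
  toFun f := ⟨postcompHom φ hφ f.1, by
    rintro y (rfl | rfl)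
    · simp [susp_apply_zero f]
    · simp [susp_apply_one f]⟩
  map_smul' c f := by apply Subtype.ext; exact map_smul (postcompHom φ hφ) c f.1
  map_zero' := by apply Subtype.ext; exact map_zero (postcompHom φ hφ)
  map_add' f g := by apply Subtype.ext; exact map_add (postcompHom φ hφ) f.1 g.1
  map_mul' f g := by apply Subtype.ext; exact map_mul (postcompHom φ hφ) f.1 g.1

@[simp] lemma suspMap_apply (φ : A →ₙₐ[ℂ] B) (hφ : Continuous φ) (f : suspAlg A) (t : unitInterval) :
    ((suspMap φ hφ f : suspAlg B) : C(unitInterval, B)) t = φ (f.1 t) := rfl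

lemma continuous_suspMap (φ : A →ₙₐ[ℂ] B) (hφ : Continuous φ) : Continuous (suspMap φ hφ) := by
  apply Continuous.subtype_mk
  exact (ContinuousMap.continuous_postcomp _).comp continuous_subtype_val

end Susp

section MappingCone
variable {D A : Type}
  [NonUnitalNormedRing D] [NormedSpace ℂ D] [IsScalarTower ℂ D D] [SMulCommClass ℂ D D]
  [NonUnitalNormedRing A] [NormedSpace ℂ A] [IsScalarTower ℂ A A] [SMulCommClass ℂ A A]

/-- The mapping cone `C_π = {(c, d) ∈ CA × D : c(1) = 0, c(0) = π(d)}` of `π : D → A`,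
as a closed subalgebra of `C([0,1], A) × D` (with the maximum norm). -/
def mappingCone (π : D →ₙₐ[ℂ] A) : NonUnitalSubalgebra ℂ (C(unitInterval, A) × D) where
  carrier := {p | p.1 1 = 0 ∧ p.1 0 = π p.2}
  add_mem' := by
    rintro p q ⟨hp1, hp0⟩ ⟨hq1, hq0⟩
    exact ⟨by simp [hp1, hq1], by simp [hp0, hq0]⟩
  zero_mem' := ⟨rfl, by simp⟩
  mul_mem' := by
    rintro p q ⟨hp1, hp0⟩ ⟨hq1, hq0⟩
    exact ⟨by simp [hp1, hq1], by simp [hp0, hq0]⟩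
  smul_mem' := by
    rintro c p ⟨hp1, hp0⟩
    exact ⟨by simp [hp1], by simp [hp0]⟩

@[simp] lemma mem_mappingCone {π : D →ₙₐ[ℂ] A} {p : C(unitInterval, A) × D} :
    p ∈ mappingCone π ↔ p.1 1 = 0 ∧ p.1 0 = π p.2 := Iff.rfl

lemma isClosed_mappingCone (π : D →ₙₐ[ℂ] A) (hπ : Continuous π) :
    IsClosed ((mappingCone π : Set (C(unitInterval, A) × D))) := by
  have h1 : IsClosed {p : C(unitInterval, A) × D | p.1 1 = 0} :=
    isClosed_eq ((continuous_eval_const 1).comp continuous_fst) continuous_const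
  have h2 : IsClosed {p : C(unitInterval, A) × D | p.1 0 = π p.2} :=
    isClosed_eq ((continuous_eval_const 0).comp continuous_fst)
      (hπ.comp continuous_snd)
  exact h1.inter h2

/-- The canonical epimorphism `ε(π) : C_π → D, (c, d) ↦ d`. -/
def coneEps (π : D →ₙₐ[ℂ] A) : mappingCone π →ₙₐ[ℂ] D where
  toFun p := p.1.2
  map_smul' _ _ := rfl
  map_zero' := rfl
  map_add' _ _ := rfl
  map_mul' _ _ := rfl

lemma continuous_coneEps (π : D →ₙₐ[ℂ] A) : Continuous (coneEps π) :=
  continuous_snd.comp continuous_subtype_val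

/-- The canonical inclusion `ι(π) : ΣA → C_π, f ↦ (f, 0)`. -/
def coneIota (π : D →ₙₐ[ℂ] A) : suspAlg A →ₙₐ[ℂ] mappingCone π where
  toFun f := ⟨(f.1, 0), ⟨susp_apply_one f, by simp [susp_apply_zero f]⟩⟩
  map_smul' c f := by apply Subtype.ext; exact Prod.ext (by rfl) (by simp)
  map_zero' := by apply Subtype.ext; exact Prod.ext (by rfl) (by simp)
  map_add' f g := by apply Subtype.ext; exact Prod.ext (by rfl) (by simp)
  map_mul' f g := by apply Subtype.ext; exact Prod.ext (by rfl) (by simp)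

lemma continuous_coneIota (π : D →ₙₐ[ℂ] A) : Continuous (coneIota π) := by
  apply Continuous.subtype_mk
  exact (continuous_subtype_val).prodMk continuous_const

end MappingCone

section Homotopy
/-- Two continuous homomorphisms `φ, ψ : A → B` are homotopic if there is a continuous
homomorphism `H : A → C([0,1], B)` with `ev₀ ∘ H = φ` and `ev₁ ∘ H = ψ`. -/
def NAlgHomotopic {A B : Type} [NonUnitalNonAssocSemiring A] [Module ℂ A] [TopologicalSpace A]
    [NonUnitalNonAssocSemiring B] [Module ℂ B] [TopologicalSpace B] [IsTopologicalSemiring B]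
    [ContinuousConstSMul ℂ B] (φ ψ : A →ₙₐ[ℂ] B) : Prop :=
  ∃ H : A →ₙₐ[ℂ] C(unitInterval, B),
    Continuous H ∧ (∀ a, H a 0 = φ a) ∧ (∀ a, H a 1 = ψ a)
end Homotopy

open CategoryTheory

/-- A bundled (possibly non-unital, possibly degenerate) complex Banach algebra. -/
structure BanAlg : Type 1 where
  carrier : Type
  [nonUnitalNormedRing : NonUnitalNormedRing carrier]
  [normedSpace : NormedSpace ℂ carrier]
  [isScalarTower : IsScalarTower ℂ carrier carrier]
  [smulCommClass : SMulCommClass ℂ carrier carrier]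
  [completeSpace : CompleteSpace carrier]

namespace BanAlg

attribute [instance] nonUnitalNormedRing normedSpace isScalarTower smulCommClass completeSpace

instance : CoeSort BanAlg Type := ⟨carrier⟩

/-- Build a bundled Banach algebra from an unbundled one. -/
def of (A : Type) [NonUnitalNormedRing A] [NormedSpace ℂ A] [IsScalarTower ℂ A A]
    [SMulCommClass ℂ A A] [CompleteSpace A] : BanAlg := ⟨A⟩

/-- The category `BanAlg` of Banach algebras and continuous algebra homomorphisms. -/
instance : Category BanAlg where
  Hom A B := {f : A →ₙₐ[ℂ] B // Continuous f}
  id A := ⟨NonUnitalAlgHom.id ℂ A, continuous_id⟩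
  comp f g := ⟨g.1.comp f.1, g.2.comp f.2⟩
  id_comp f := Subtype.ext (by ext x; rfl)
  comp_id f := Subtype.ext (by ext x; rfl)
  assoc f g h := Subtype.ext (by ext x; rfl)

/-- A closed subalgebra of a Banach algebra is a Banach algebra. -/
def ofSubalg {R : Type} [NonUnitalNormedRing R] [NormedSpace ℂ R] [IsScalarTower ℂ R R]
    [SMulCommClass ℂ R R] [CompleteSpace R] (S : NonUnitalSubalgebra ℂ R)
    (hS : IsClosed (S : Set R)) : BanAlg :=
  letI : CompleteSpace S := hS.completeSpace_coe
  letI : NormedSpace ℂ S := SubmoduleClass.toNormedSpace (R := ℂ) S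
  BanAlg.of S

end BanAlg

/-- The suspension, as an object of `BanAlg`. -/
def suspObj (A : BanAlg) : BanAlg := BanAlg.ofSubalg (suspAlg A) (isClosed_vanishAlg _)

/-- The suspension of a morphism of `BanAlg`. -/
def suspHom {A B : BanAlg} (f : A ⟶ B) : suspObj A ⟶ suspObj B :=
  ⟨suspMap f.1 f.2, continuous_suspMap f.1 f.2⟩

/-- The suspension functor `Σ : BanAlg ⥤ BanAlg`. -/
def suspFunctor : BanAlg ⥤ BanAlg where
  obj := suspObj
  map := suspHom
  map_id := by
    intro A
    apply Subtype.ext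
    apply NonUnitalAlgHom.ext
    intro f
    apply Subtype.ext
    ext t
    rfl
  map_comp := by
    intro A B C f g
    apply Subtype.ext
    apply NonUnitalAlgHom.ext
    intro x
    apply Subtype.ext
    ext t
    rfl

/-- The mapping cone of a morphism of `BanAlg`, as an object of `BanAlg`. -/
def coneObj {D A : BanAlg} (π : D ⟶ A) : BanAlg :=
  BanAlg.ofSubalg (mappingCone π.1) (isClosed_mappingCone π.1 π.2)

/-- The canonical inclusion `ι(π) : ΣA → C_π`, as a morphism of `BanAlg`. -/
def coneIotaHom {D A : BanAlg} (π : D ⟶ A) : suspObj A ⟶ coneObj π :=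
  ⟨coneIota π.1, continuous_coneIota π.1⟩

/-- Extensions of Banach algebras: `i` is injective with closed range, `π` is surjective,
and `range i = ker π`. -/
structure IsExtensionHom {B D A : BanAlg} (i : B ⟶ D) (π : D ⟶ A) : Prop where
  inj : Function.Injective i.1
  closedRange : IsClosed (Set.range i.1)
  surj : Function.Surjective π.1
  exact : Set.range i.1 = {d | π.1 d = 0}

/-- A (quotient map of an) extension is semi-split if it admits a continuous linear
(not necessarily multiplicative) section. -/
def IsSemiSplit {D A : BanAlg} (π : D ⟶ A) : Prop :=
  ∃ s : A.carrier →L[ℂ] D.carrier, ∀ a, π.1 (s a) = a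

/-- The canonical comparison morphism `κ_π : B → C_π`, `b ↦ (0, i(b))`. -/
def coneKappaHom {B D A : BanAlg} (i : B ⟶ D) (π : D ⟶ A) (hext : IsExtensionHom i π) :
    B ⟶ coneObj π := by
  have hker : ∀ b, (0 : A.carrier) = π.1 (i.1 b) := by
    intro b
    have : i.1 b ∈ {d | π.1 d = 0} := hext.exact ▸ Set.mem_range_self b
    exact this.symm
  refine ⟨{ toFun := fun b => ⟨((0 : C(unitInterval, A.carrier)), i.1 b), ⟨rfl, hker b⟩⟩,
            map_smul' := ?_, map_zero' := ?_, map_add' := ?_, map_mul' := ?_ }, ?_⟩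
  · intro c b
    apply Subtype.ext
    refine Prod.ext ?_ ?_
    · simp only [map_smul]; exact (smul_zero c).symm
    · simp only [map_smul]; rfl
  · apply Subtype.ext; exact Prod.ext (by simp; rfl) (by simp; rfl)
  · intro a b
    apply Subtype.ext
    refine Prod.ext ?_ ?_
    · simp only [map_add]; exact (add_zero 0).symm
    · simp only [map_add]; rfl
  · intro a b
    apply Subtype.ext
    refine Prod.ext ?_ ?_
    · simp only [map_mul]; exact (mul_zero 0).symm
    · simp only [map_mul]; rfl
  · exact Continuous.subtype_mk (continuous_const.prodMk (i.2.comp continuous_id)) _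

/-- A functor on `BanAlg` is homotopy invariant if it identifies homotopic morphisms. -/
def HomotopyInvariant {𝒞 : Type*} [Category 𝒞] (F : BanAlg ⥤ 𝒞) : Prop :=
  ∀ (A B : BanAlg) (f g : A ⟶ B), NAlgHomotopic f.1 g.1 → F.map f = F.map g

/-- A functor on `BanAlg` with values in an additive category is half-exact for semi-split
extensions if, for every object `X` and every semi-split extension `B ↣ D ↠ A`, the
sequences of abelian groups `Hom(X,F(B)) → Hom(X,F(D)) → Hom(X,F(A))` and
`Hom(F(A),X) → Hom(F(D),X) → Hom(F(B),X)` are exact in the middle. -/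
def HalfExactFunctor {𝒞 : Type*} [Category 𝒞] [Preadditive 𝒞] (F : BanAlg ⥤ 𝒞) : Prop :=
  ∀ (B D A : BanAlg) (i : B ⟶ D) (π : D ⟶ A), IsExtensionHom i π → IsSemiSplit π →
    ∀ X : 𝒞,
      Function.Exact (fun u : X ⟶ F.obj B => u ≫ F.map i)
        (fun u : X ⟶ F.obj D => u ≫ F.map π) ∧
      Function.Exact (fun u : F.obj A ⟶ X => F.map π ≫ u)
        (fun u : F.obj D ⟶ X => F.map i ≫ u)

/-- A functor on `BanAlg` with values in an additive category is split-exact if for every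
split extension `B ↣ D ↠ A` with multiplicative continuous section `σ`, the induced map
`F(B) ⊕ F(A) → F(D)` is an isomorphism. -/
def SplitExactFunctor {𝒞 : Type*} [Category 𝒞] [Preadditive 𝒞]
    [Limits.HasBinaryBiproducts 𝒞] (F : BanAlg ⥤ 𝒞) : Prop :=
  ∀ (B D A : BanAlg) (i : B ⟶ D) (π : D ⟶ A) (s : A ⟶ D),
    IsExtensionHom i π → s ≫ π = 𝟙 A →
    IsIso (Limits.biprod.desc (F.map i) (F.map s))

namespace BanAlg

@[ext] lemma hom_ext {A B : BanAlg} {f g : A ⟶ B} (h : ∀ x, f.1 x = g.1 x) : f = g :=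
  Subtype.ext (NonUnitalAlgHom.ext h)

@[simp] lemma id_apply {A : BanAlg} (x : A) : (𝟙 A : A ⟶ A).1 x = x := rfl

end BanAlg

lemma nAlgHomotopic_of_family {A B : BanAlg} (H : I → (A ⟶ B))
    (hH : Continuous fun p : A × I => (H p.2).1 p.1) : NAlgHomotopic (H 0).1 (H 1).1 := by
  refine ⟨{ toFun a := ⟨fun u => (H u).1 a, hH.comp (continuous_const.prodMk continuous_id)⟩
            map_smul' c a := by ext u; simp
            map_zero' := by ext u; simp
            map_add' a b := by ext u; simp
            map_mul' a b := by ext u; simp }, ?_, fun _ => rfl, fun _ => rfl⟩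
  exact ContinuousMap.continuous_of_continuous_uncurry _ hH

lemma HomotopyInvariant.map_eq_of_family {𝒞 : Type*} [Category 𝒞] {F : BanAlg ⥤ 𝒞}
    (hF : HomotopyInvariant F) {A B : BanAlg}
    (H : I → (A ⟶ B)) (hH : Continuous fun p : A × I => (H p.2).1 p.1) :
    F.map (H 0) = F.map (H 1) :=
  hF A B _ _ (nAlgHomotopic_of_family H hH)

section HalfExact

variable {𝒜 : Type*} [Category 𝒜] [Abelian 𝒜]

def IsSemiSplitExtension {B D A : BanAlg} (i : B ⟶ D) (π : D ⟶ A) : Prop :=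
  IsExtensionHom i π ∧ IsSemiSplit π

def HalfExactOnSemiSplit (F : BanAlg ⥤ 𝒜) : Prop :=
  ∀ (B D A : BanAlg) (i : B ⟶ D) (π : D ⟶ A), IsExtensionHom i π → IsSemiSplit π →
    ∃ w : F.map i ≫ F.map π = 0, (ShortComplex.mk (F.map i) (F.map π) w).Exact

lemma HalfExactOnSemiSplit.exact {F : BanAlg ⥤ 𝒜} (hF : HalfExactOnSemiSplit F)
    {B D A : BanAlg} {i : B ⟶ D} {π : D ⟶ A} (h : IsSemiSplitExtension i π) :
    ∃ w : F.map i ≫ F.map π = 0, (ShortComplex.mk (F.map i) (F.map π) w).Exact :=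
  hF B D A i π h.1 h.2

lemma isSemiSplitExtension_of_section {B D A : BanAlg} {i : B ⟶ D} {π : D ⟶ A}
    (hinj : Function.Injective i.1) (hexact : Set.range i.1 = {d | π.1 d = 0})
    (s : A.carrier →L[ℂ] D.carrier) (hs : ∀ a, π.1 (s a) = a) : IsSemiSplitExtension i π :=
  ⟨{ inj := hinj
     closedRange := hexact ▸ isClosed_eq π.2 continuous_const
     surj := fun a => ⟨s a, hs a⟩
     exact := hexact }, s, hs⟩

lemma isSemiSplitExtension_unit :
    IsSemiSplitExtension (𝟙 (BanAlg.of Unit)) (𝟙 (BanAlg.of Unit)) :=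
  isSemiSplitExtension_of_section (fun _ _ h => h)
    (Set.ext fun x => ⟨fun _ => Subsingleton.elim (α := Unit) _ _, fun _ => ⟨x, rfl⟩⟩)
    (ContinuousLinearMap.id ℂ _) fun _ => rfl

lemma HalfExactOnSemiSplit.isZero_obj_unit {F : BanAlg ⥤ 𝒜} (hF : HalfExactOnSemiSplit F) :
    Limits.IsZero (F.obj (BanAlg.of Unit)) := by
  obtain ⟨w, -⟩ := hF.exact isSemiSplitExtension_unit
  rw [F.map_id, Category.comp_id] at w
  exact (Limits.IsZero.iff_id_eq_zero _).2 w

def IsContractible (W : BanAlg) : Prop :=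
  ∃ H : I → (W ⟶ W), Continuous (fun p : W × I => (H p.2).1 p.1) ∧
    H 0 = 𝟙 W ∧ ∀ w, (H 1).1 w = 0

lemma IsContractible.isZero_obj {W : BanAlg} (hW : IsContractible W) {F : BanAlg ⥤ 𝒜}
    (hhtp : HomotopyInvariant F) (hhe : HalfExactOnSemiSplit F) : Limits.IsZero (F.obj W) := by
  obtain ⟨H, hH, h0, h1⟩ := hW
  let toUnit : W ⟶ BanAlg.of Unit := ⟨0, continuous_const⟩
  let ofUnit : BanAlg.of Unit ⟶ W := ⟨0, continuous_const⟩
  have hfactor : H 1 = toUnit ≫ ofUnit := BanAlg.hom_ext h1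
  rw [Limits.IsZero.iff_id_eq_zero, ← F.map_id, ← h0, hhtp.map_eq_of_family H hH, hfactor,
    F.map_comp, hhe.isZero_obj_unit.eq_of_tgt (F.map _) 0, Limits.zero_comp]

end HalfExact

namespace IsExtensionHom

variable {B D A : BanAlg} {i : B ⟶ D} {π : D ⟶ A}

lemma isEmbedding (hext : IsExtensionHom i π) : Topology.IsEmbedding i.1 := by
  let iL : B.carrier →L[ℂ] D.carrier := ⟨(i.1 : B.carrier →ₗ[ℂ] D.carrier), i.2⟩
  obtain ⟨K, hK⟩ := iL.antilipschitz_of_injective_of_isClosed_range hext.inj hext.closedRange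
  exact (hK.isUniformEmbedding iL.uniformContinuous).isEmbedding

noncomputable def lift (hext : IsExtensionHom i π) (d : D) (hd : π.1 d = 0) : B :=
  (show d ∈ Set.range i.1 from hext.exact ▸ hd).choose

@[simp] lemma map_lift (hext : IsExtensionHom i π) (d : D) (hd : π.1 d = 0) :
    i.1 (hext.lift d hd) = d :=
  (show d ∈ Set.range i.1 from hext.exact ▸ hd).choose_spec

lemma continuous_lift (hext : IsExtensionHom i π) {X : Type*} [TopologicalSpace X] {g : X → D}
    (hg : Continuous g) (hg0 : ∀ x, π.1 (g x) = 0) : Continuous fun x => hext.lift (g x) (hg0 x) :=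
  hext.isEmbedding.continuous_iff.2 (by simpa [Function.comp_def] using hg)

lemma map_eq_zero (hext : IsExtensionHom i π) (b : B) : π.1 (i.1 b) = 0 :=
  (Set.ext_iff.1 hext.exact _).1 ⟨b, rfl⟩

end IsExtensionHom

section Reparametrization

def reparamHom (A : BanAlg) {Y : Set I} (φ : C(I, I)) (hφ : Set.MapsTo φ Y Y) :
    BanAlg.ofSubalg (vanishAlg I A Y) (isClosed_vanishAlg Y) ⟶
      BanAlg.ofSubalg (vanishAlg I A Y) (isClosed_vanishAlg Y) :=
  ⟨{ toFun f := ⟨f.1.comp φ, fun _ hy => f.2 _ (hφ hy)⟩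
     map_smul' _ _ := rfl
     map_zero' := rfl
     map_add' _ _ := rfl
     map_mul' _ _ := rfl },
   ((ContinuousMap.continuous_precomp φ).comp continuous_subtype_val).subtype_mk _⟩

lemma continuous_reparamHom_family (A : BanAlg) {Y : Set I} (φ : C(I × I, I))
    (hφ : ∀ u, Set.MapsTo (φ.curry u) Y Y) :
    Continuous fun p : BanAlg.ofSubalg (vanishAlg I A Y) (isClosed_vanishAlg Y) × I =>
      (reparamHom A (φ.curry p.2) (hφ p.2)).1 p.1 := by
  refine Continuous.subtype_mk (ContinuousMap.continuous_of_continuous_uncurry _ ?_) _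
  change Continuous fun p : (vanishAlg I A.carrier Y × I) × I => p.1.1.1 (φ (p.1.2, p.2))
  fun_prop

def coneAlg (A : BanAlg) : BanAlg := BanAlg.ofSubalg (vanishAlg I A {1}) (isClosed_vanishAlg _)

def slideToOne : C(I × I, I) := ⟨fun p => σ (σ p.1 * σ p.2), by fun_prop⟩

@[simp] lemma slideToOne_apply (u t : I) : slideToOne (u, t) = σ (σ u * σ t) := rfl

lemma isContractible_coneAlg (A : BanAlg) : IsContractible (coneAlg A) := by
  have hφ : ∀ u, Set.MapsTo (slideToOne.curry u) {1} {1} := by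
    intro u t ht
    simp_all
  refine ⟨fun u => reparamHom A _ (hφ u), continuous_reparamHom_family A _ hφ, ?_, ?_⟩
  · ext f
    exact Subtype.ext (ContinuousMap.ext fun t => congrArg f.1 (by simp))
  · intro f
    exact Subtype.ext (ContinuousMap.ext fun t => (congrArg f.1 (by simp)).trans (f.2 1 rfl))

lemma IsContractible.susp {W : BanAlg} (hW : IsContractible W) : IsContractible (suspObj W) := by
  obtain ⟨H, hH, h0, h1⟩ := hW
  refine ⟨fun u => suspHom (H u), ?_, ?_, fun f => Subtype.ext (ContinuousMap.ext fun t => h1 _)⟩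
  · refine Continuous.subtype_mk (ContinuousMap.continuous_of_continuous_uncurry _ ?_) _
    change Continuous fun p : (suspAlg W.carrier × I) × I => (H p.1.2).1 (p.1.1.1 p.2)
    exact hH.comp (by fun_prop : Continuous fun p : (suspAlg W.carrier × I) × I =>
      (p.1.1.1 p.2, p.1.2))
  · exact (congrArg suspHom h0).trans (suspFunctor.map_id W)

def suspReverse (W : BanAlg) : suspObj W ≅ suspObj W where
  hom := reparamHom W ⟨σ, unitInterval.continuous_symm⟩ (by rintro _ (rfl | rfl) <;> simp)
  inv := reparamHom W ⟨σ, unitInterval.continuous_symm⟩ (by rintro _ (rfl | rfl) <;> simp)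
  hom_inv_id := by
    ext f; exact Subtype.ext (ContinuousMap.ext fun t => congrArg f.1 (unitInterval.symm_symm t))
  inv_hom_id := by
    ext f; exact Subtype.ext (ContinuousMap.ext fun t => congrArg f.1 (unitInterval.symm_symm t))

end Reparametrization

section Suspension

variable {B D A : BanAlg}

lemma mem_suspAlg_iff {X : Type} [NonUnitalNormedRing X] [NormedSpace ℂ X] [IsScalarTower ℂ X X]
    [SMulCommClass ℂ X X] {f : C(I, X)} : f ∈ suspAlg X ↔ f 0 = 0 ∧ f 1 = 0 := by
  simp [suspAlg]

def suspCLM (s : A.carrier →L[ℂ] D.carrier) : (suspObj A).carrier →L[ℂ] (suspObj D).carrier where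
  toFun f := ⟨(⟨s, s.continuous⟩ : C(A.carrier, D.carrier)).comp f.1,
    mem_suspAlg_iff.2 (by simp [susp_apply_zero f, susp_apply_one f])⟩
  map_add' f g := Subtype.ext (ContinuousMap.ext fun t => map_add s (f.1 t) (g.1 t))
  map_smul' c f := Subtype.ext (ContinuousMap.ext fun t => map_smul s c (f.1 t))
  cont := ((ContinuousMap.continuous_postcomp _).comp continuous_subtype_val).subtype_mk _

lemma IsSemiSplitExtension.susp {i : B ⟶ D} {π : D ⟶ A} (h : IsSemiSplitExtension i π) :
    IsSemiSplitExtension (suspHom i) (suspHom π) := by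
  obtain ⟨hext, s, hs⟩ := h
  refine isSemiSplitExtension_of_section (fun f g hfg => Subtype.ext (ContinuousMap.ext fun t =>
    hext.inj (congrArg (fun f => f.1 t) hfg))) (Set.ext fun f => ⟨?_, fun hf => ?_⟩) (suspCLM s)
    fun f => Subtype.ext (ContinuousMap.ext fun t => hs _)
  · rintro ⟨g, rfl⟩
    exact Subtype.ext (ContinuousMap.ext fun t => hext.map_eq_zero _)
  · have hf : ∀ t, π.1 (f.1 t) = 0 := fun t => congrArg (fun f => f.1 t) hf
    refine ⟨⟨⟨fun t => hext.lift (f.1 t) (hf t), hext.continuous_lift f.1.continuous hf⟩,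
      mem_suspAlg_iff.2 ⟨hext.inj ?_, hext.inj ?_⟩⟩, Subtype.ext (ContinuousMap.ext fun t => ?_)⟩
    · simpa using susp_apply_zero f
    · simpa using susp_apply_one f
    · exact hext.map_lift (f.1 t) (hf t)

end Suspension

section MappingCone

variable {B D A : BanAlg}

def coneEpsHom (π : D ⟶ A) : coneObj π ⟶ D := ⟨coneEps π.1, continuous_coneEps π.1⟩

def coneProj (π : D ⟶ A) : coneObj π ⟶ coneAlg A :=
  ⟨{ toFun x := ⟨x.1.1, fun _ ht => ht ▸ x.2.1⟩
     map_smul' _ _ := rfl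
     map_zero' := rfl
     map_add' _ _ := rfl
     map_mul' _ _ := rfl },
   (continuous_fst.comp continuous_subtype_val).subtype_mk _⟩

lemma coneKappaHom_comp_coneEpsHom {i : B ⟶ D} {π : D ⟶ A} (hext : IsExtensionHom i π) :
    coneKappaHom i π hext ≫ coneEpsHom π = i := rfl

def coneEpsSection (π : D ⟶ A) : D.carrier →L[ℂ] (coneObj π).carrier where
  toFun d := ⟨(⟨fun t => ((σ t : ℝ) : ℂ) • π.1 d, by fun_prop⟩, d), by simp⟩
  map_add' d d' := Subtype.ext (Prod.ext (ContinuousMap.ext fun t =>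
    (congrArg _ (map_add π.1 d d')).trans (smul_add _ _ _)) rfl)
  map_smul' c d := Subtype.ext (Prod.ext (ContinuousMap.ext fun t =>
    (congrArg _ (map_smul π.1 c d)).trans (smul_comm _ _ _)) rfl)
  cont := by
    have := π.2
    refine Continuous.subtype_mk (Continuous.prodMk ?_ continuous_id) _
    refine ContinuousMap.continuous_of_continuous_uncurry _ ?_
    change Continuous fun p : D.carrier × I => ((σ p.2 : ℝ) : ℂ) • π.1 p.1
    fun_prop

lemma isSemiSplitExtension_coneIota_coneEps (π : D ⟶ A) :
    IsSemiSplitExtension (coneIotaHom π) (coneEpsHom π) := by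
  refine isSemiSplitExtension_of_section
    (fun f g h => Subtype.ext (congrArg (fun x => x.1.1) h))
    (Set.ext fun x => ⟨?_, fun hx => ?_⟩) (coneEpsSection π) fun _ => rfl
  · rintro ⟨f, rfl⟩
    rfl
  · refine ⟨⟨x.1.1, mem_suspAlg_iff.2 ⟨?_, x.2.1⟩⟩, Subtype.ext (Prod.ext rfl hx.symm)⟩
    rw [x.2.2]
    exact (congrArg π.1 hx).trans (map_zero π.1)

lemma IsExtensionHom.isSemiSplitExtension_coneKappa {i : B ⟶ D} {π : D ⟶ A}
    (hext : IsExtensionHom i π) (hss : IsSemiSplit π) :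
    IsSemiSplitExtension (coneKappaHom i π hext) (coneProj π) := by
  obtain ⟨s, hs⟩ := hss
  let sC : (coneAlg A).carrier →L[ℂ] (coneObj π).carrier :=
    { toFun c := ⟨(c.1, s (c.1 0)), c.2 1 rfl, (hs _).symm⟩
      map_add' c c' := Subtype.ext (Prod.ext rfl (map_add s (c.1 0) (c'.1 0)))
      map_smul' r c := Subtype.ext (Prod.ext rfl (map_smul s r (c.1 0)))
      cont := (continuous_subtype_val.prodMk (s.continuous.comp
        ((continuous_eval_const 0).comp continuous_subtype_val))).subtype_mk _ }
  refine isSemiSplitExtension_of_section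
    (fun b b' h => hext.inj (congrArg (fun x => x.1.2) h))
    (Set.ext fun x => ⟨?_, fun hx => ?_⟩) sC fun _ => rfl
  · rintro ⟨b, rfl⟩
    rfl
  · have hx : x.1.1 = 0 := congrArg Subtype.val hx
    have hd : π.1 x.1.2 = 0 := by rw [← x.2.2, hx]; rfl
    exact ⟨hext.lift _ hd, Subtype.ext (Prod.ext hx.symm (hext.map_lift _ hd))⟩

end MappingCone

section ConeOfExtension

variable {B E Q : BanAlg}

def coneAlgToCone (κ : B ⟶ E) : coneAlg B ⟶ coneObj κ :=
  ⟨{ toFun β := ⟨(postcompHom κ.1 κ.2 β.1, β.1 0),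
        (congrArg κ.1 (β.2 1 rfl)).trans (map_zero κ.1), rfl⟩
     map_smul' c β := Subtype.ext (Prod.ext (map_smul (postcompHom κ.1 κ.2) c β.1) rfl)
     map_zero' := Subtype.ext (Prod.ext (map_zero (postcompHom κ.1 κ.2)) rfl)
     map_add' β β' := Subtype.ext (Prod.ext (map_add (postcompHom κ.1 κ.2) β.1 β'.1) rfl)
     map_mul' β β' := Subtype.ext (Prod.ext (map_mul (postcompHom κ.1 κ.2) β.1 β'.1) rfl) },
   (((ContinuousMap.continuous_postcomp _).comp continuous_subtype_val).prodMk
     ((continuous_eval_const 0).comp continuous_subtype_val)).subtype_mk _⟩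

def coneToSusp {κ : B ⟶ E} {q : E ⟶ Q} (hext : IsExtensionHom κ q) : coneObj κ ⟶ suspObj Q :=
  ⟨{ toFun x := ⟨postcompHom q.1 q.2 x.1.1, mem_suspAlg_iff.2
        ⟨by simp [x.2.2, hext.map_eq_zero], by simp [x.2.1]⟩⟩
     map_smul' c x := Subtype.ext (map_smul (postcompHom q.1 q.2) c x.1.1)
     map_zero' := Subtype.ext (map_zero (postcompHom q.1 q.2))
     map_add' x y := Subtype.ext (map_add (postcompHom q.1 q.2) x.1.1 y.1.1)
     map_mul' x y := Subtype.ext (map_mul (postcompHom q.1 q.2) x.1.1 y.1.1) },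
   ((ContinuousMap.continuous_postcomp _).comp
     (continuous_fst.comp continuous_subtype_val)).subtype_mk _⟩

lemma IsSemiSplitExtension.cone {κ : B ⟶ E} {q : E ⟶ Q} (h : IsSemiSplitExtension κ q) :
    IsSemiSplitExtension (coneAlgToCone κ) (coneToSusp h.1) := by
  obtain ⟨hext, s, hs⟩ := h
  let sCone : (suspObj Q).carrier →L[ℂ] (coneObj κ).carrier :=
    { toFun f := ⟨((suspCLM s f).1, 0), susp_apply_one (suspCLM s f),
        (susp_apply_zero (suspCLM s f)).trans (map_zero κ.1).symm⟩
      map_add' f g := Subtype.ext (Prod.ext (congrArg Subtype.val (map_add (suspCLM s) f g))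
        (add_zero 0).symm)
      map_smul' c f := Subtype.ext (Prod.ext (congrArg Subtype.val (map_smul (suspCLM s) c f))
        (smul_zero c).symm)
      cont := ((continuous_subtype_val.comp (suspCLM s).continuous).prodMk
        continuous_const).subtype_mk _ }
  refine isSemiSplitExtension_of_section (fun β β' hβ => Subtype.ext (ContinuousMap.ext fun t =>
      hext.inj (congrArg (fun x => x.1.1 t) hβ)))
    (Set.ext fun x => ⟨?_, fun hx => ?_⟩) sCone
    fun f => Subtype.ext (ContinuousMap.ext fun t => hs _)
  · rintro ⟨β, rfl⟩
    exact Subtype.ext (ContinuousMap.ext fun t => hext.map_eq_zero _)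
  · have hx : ∀ t, q.1 (x.1.1 t) = 0 := fun t => congrArg (fun f => f.1 t) hx
    have hlift : ∀ t, κ.1 (hext.lift _ (hx t)) = x.1.1 t := fun t => hext.map_lift _ (hx t)
    refine ⟨⟨⟨fun t => hext.lift _ (hx t), hext.continuous_lift x.1.1.continuous hx⟩,
      fun _ ht => hext.inj ?_⟩, Subtype.ext (Prod.ext (ContinuousMap.ext hlift) (hext.inj ?_))⟩
    · rw [Set.mem_singleton_iff.1 ht, map_zero]
      exact (hlift 1).trans x.2.1
    · exact (hlift 0).trans x.2.2

end ConeOfExtension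

section MappingPath

variable {B E Q : BanAlg}

def mappingPath (κ : B ⟶ E) : NonUnitalSubalgebra ℂ (C(I, E.carrier) × B.carrier) where
  carrier := {p | p.1 0 = κ.1 p.2}
  add_mem' hp hq := by simp_all
  zero_mem' := by simp
  mul_mem' hp hq := by simp_all
  smul_mem' c p hp := by simp_all

@[simp] lemma mem_mappingPath {κ : B ⟶ E} {p : C(I, E.carrier) × B.carrier} :
    p ∈ mappingPath κ ↔ p.1 0 = κ.1 p.2 := Iff.rfl

lemma isClosed_mappingPath (κ : B ⟶ E) :
    IsClosed (mappingPath κ : Set (C(I, E.carrier) × B.carrier)) :=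
  isClosed_eq ((continuous_eval_const 0).comp continuous_fst) (κ.2.comp continuous_snd)

def mappingPathObj (κ : B ⟶ E) : BanAlg :=
  BanAlg.ofSubalg (mappingPath κ) (isClosed_mappingPath κ)

def mappingPathIncl (κ : B ⟶ E) : B ⟶ mappingPathObj κ :=
  ⟨{ toFun b := ⟨(ContinuousMap.const I (κ.1 b), b), rfl⟩
     map_smul' c b := Subtype.ext (Prod.ext (ContinuousMap.ext fun _ => map_smul κ.1 c b) rfl)
     map_zero' := Subtype.ext (Prod.ext (ContinuousMap.ext fun _ => map_zero κ.1) rfl)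
     map_add' b b' := Subtype.ext (Prod.ext (ContinuousMap.ext fun _ => map_add κ.1 b b') rfl)
     map_mul' b b' := Subtype.ext (Prod.ext (ContinuousMap.ext fun _ => map_mul κ.1 b b') rfl) },
   ((ContinuousMap.continuous_const'.comp κ.2).prodMk continuous_id).subtype_mk _⟩

def mappingPathRetract (κ : B ⟶ E) : mappingPathObj κ ⟶ B :=
  ⟨{ toFun p := p.1.2
     map_smul' _ _ := rfl
     map_zero' := rfl
     map_add' _ _ := rfl
     map_mul' _ _ := rfl },
   continuous_snd.comp continuous_subtype_val⟩

def mappingPathEval (κ : B ⟶ E) : mappingPathObj κ ⟶ E :=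
  ⟨{ toFun p := p.1.1 1
     map_smul' _ _ := rfl
     map_zero' := rfl
     map_add' _ _ := rfl
     map_mul' _ _ := rfl },
   (continuous_eval_const 1).comp (continuous_fst.comp continuous_subtype_val)⟩

def coneToMappingPath (κ : B ⟶ E) : coneObj κ ⟶ mappingPathObj κ :=
  ⟨{ toFun x := ⟨x.1, x.2.2⟩
     map_smul' _ _ := rfl
     map_zero' := rfl
     map_add' _ _ := rfl
     map_mul' _ _ := rfl },
   continuous_subtype_val.subtype_mk _⟩

lemma mappingPathIncl_comp_eval (κ : B ⟶ E) : mappingPathIncl κ ≫ mappingPathEval κ = κ := rfl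

def shrinkToZero : C(I × I, I) := ⟨fun p => σ p.1 * p.2, by fun_prop⟩

def mappingPathShrink (κ : B ⟶ E) (u : I) : mappingPathObj κ ⟶ mappingPathObj κ :=
  ⟨{ toFun p := ⟨(p.1.1.comp (shrinkToZero.curry u), p.1.2),
        (congrArg p.1.1 (mul_zero (σ u))).trans p.2⟩
     map_smul' _ _ := rfl
     map_zero' := rfl
     map_add' _ _ := rfl
     map_mul' _ _ := rfl },
   (((ContinuousMap.continuous_precomp _).comp (continuous_fst.comp continuous_subtype_val)).prodMk
     (continuous_snd.comp continuous_subtype_val)).subtype_mk _⟩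

lemma isIso_map_mappingPathIncl {𝒞 : Type*} [Category 𝒞] {F : BanAlg ⥤ 𝒞}
    (hF : HomotopyInvariant F) (κ : B ⟶ E) : IsIso (F.map (mappingPathIncl κ)) := by
  have hshrink : F.map (mappingPathShrink κ 0) = F.map (mappingPathShrink κ 1) := by
    refine hF.map_eq_of_family _ (Continuous.subtype_mk (Continuous.prodMk ?_ (by fun_prop)) _)
    refine ContinuousMap.continuous_of_continuous_uncurry _ ?_
    change Continuous fun p : (mappingPath κ × I) × I => p.1.1.1.1 (shrinkToZero (p.1.2, p.2))
    fun_prop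
  have h0 : mappingPathShrink κ 0 = 𝟙 _ := by
    ext p
    refine Subtype.ext (Prod.ext (ContinuousMap.ext fun t => ?_) rfl)
    show p.1.1 (σ 0 * t) = p.1.1 t
    simp
  have h1 : mappingPathShrink κ 1 = mappingPathRetract κ ≫ mappingPathIncl κ := by
    ext p
    refine Subtype.ext (Prod.ext (ContinuousMap.ext fun t => ?_) rfl)
    show p.1.1 (σ 1 * t) = κ.1 p.1.2
    simpa using p.2
  refine ⟨F.map (mappingPathRetract κ), by rw [← F.map_comp]; exact F.map_id B, ?_⟩
  rw [← F.map_comp, ← h1, ← hshrink, h0, F.map_id]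

/-- Using a contraction `H` of `Q` and a section `s` of `q`, the path
`u ↦ y - s(q y) + s(H_{1-u}(q y))` joins a point of `ker q = κ(B)` to `y`, linearly in `y`. -/
lemma IsSemiSplitExtension.mappingPath {κ : B ⟶ E} {q : E ⟶ Q} (h : IsSemiSplitExtension κ q)
    (hQ : IsContractible Q) :
    IsSemiSplitExtension (coneToMappingPath κ) (mappingPathEval κ) := by
  obtain ⟨hext, s, hs⟩ := h
  obtain ⟨H, hH, h0, h1⟩ := hQ
  have hq := q.2
  have hker : ∀ y, q.1 (y - s (q.1 y)) = 0 := fun y => by simp [hs]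
  have hpath : Continuous fun p : E.carrier × I =>
      p.1 - s (q.1 p.1) + s ((H (σ p.2)).1 (q.1 p.1)) := by
    have := hH.comp ((hq.comp continuous_fst).prodMk
      (unitInterval.continuous_symm.comp continuous_snd))
    fun_prop
  let path : E.carrier →L[ℂ] C(I, E.carrier) :=
    { toFun y := ⟨fun u => y - s (q.1 y) + s ((H (σ u)).1 (q.1 y)),
        hpath.comp (continuous_const.prodMk continuous_id)⟩
      map_add' y y' := by
        ext u
        simp only [ContinuousMap.coe_mk, map_add, ContinuousMap.add_apply]
        abel
      map_smul' c y := by ext u; simp [smul_sub]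
      cont := ContinuousMap.continuous_of_continuous_uncurry _ hpath }
  let base : E.carrier →L[ℂ] B.carrier :=
    { toFun y := hext.lift _ (hker y)
      map_add' y y' := hext.inj (by simp only [map_add, hext.map_lift]; abel)
      map_smul' c y := hext.inj (by simp [smul_sub])
      cont := hext.continuous_lift (by fun_prop) hker }
  have hmem : ∀ y, (path y, base y) ∈ _root_.mappingPath κ := fun y => by
    change y - s (q.1 y) + s ((H (σ 0)).1 (q.1 y)) = κ.1 (hext.lift _ (hker y))
    simp [h1]
  let sP : E.carrier →L[ℂ] (mappingPathObj κ).carrier :=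
    { toFun y := ⟨(path y, base y), hmem y⟩
      map_add' y y' := Subtype.ext (Prod.ext (map_add path y y') (map_add base y y'))
      map_smul' c y := Subtype.ext (Prod.ext (map_smul path c y) (map_smul base c y))
      cont := (path.continuous.prodMk base.continuous).subtype_mk _ }
  refine isSemiSplitExtension_of_section
    (fun x x' hx => Subtype.ext (congrArg (fun p : (mappingPathObj κ).carrier => p.1) hx))
    (Set.ext fun p => ⟨?_, fun hp => ⟨⟨p.1, hp, p.2⟩, rfl⟩⟩) sP fun y => ?_
  · rintro ⟨x, rfl⟩
    exact x.2.1
  · change y - s (q.1 y) + s ((H (σ 1)).1 (q.1 y)) = y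
    simp [h0]

end MappingPath

section Excision

variable {𝒜 : Type*} [Category 𝒜] [Abelian 𝒜] {F : BanAlg ⥤ 𝒜}

lemma isIso_map_of_isSemiSplitExtension (hhtp : HomotopyInvariant F)
    (hhe : HalfExactOnSemiSplit F) {B E Q : BanAlg} {κ : B ⟶ E} {q : E ⟶ Q}
    (h : IsSemiSplitExtension κ q) (hQ : IsContractible Q) : IsIso (F.map κ) := by
  have hepi : Epi (F.map κ) := by
    obtain ⟨_, hex⟩ := hhe.exact h
    exact hex.epi_f ((hQ.isZero_obj hhtp hhe).eq_of_tgt _ _)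
  have hcone : Limits.IsZero (F.obj (coneObj κ)) := by
    obtain ⟨_, hex⟩ := hhe.exact h.cone
    exact hex.isZero_X₂ (((isContractible_coneAlg B).isZero_obj hhtp hhe).eq_of_src _ _)
      ((hQ.susp.isZero_obj hhtp hhe).eq_of_tgt _ _)
  have hmono : Mono (F.map (mappingPathEval κ)) := by
    obtain ⟨_, hex⟩ := hhe.exact (h.mappingPath hQ)
    exact hex.mono_g (hcone.eq_of_src _ _)
  have := isIso_map_mappingPathIncl hhtp κ
  have : Mono (F.map κ) := by
    rw [← mappingPathIncl_comp_eval κ, F.map_comp]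
    infer_instance
  exact isIso_of_mono_of_epi _

lemma isIso_map_coneKappaHom (hhtp : HomotopyInvariant F) (hhe : HalfExactOnSemiSplit F)
    {B D A : BanAlg} {i : B ⟶ D} {π : D ⟶ A} (hext : IsExtensionHom i π) (hss : IsSemiSplit π) :
    IsIso (F.map (coneKappaHom i π hext)) :=
  isIso_map_of_isSemiSplitExtension hhtp hhe (hext.isSemiSplitExtension_coneKappa hss)
    (isContractible_coneAlg A)

end Excision

section Rotation

variable {D A : BanAlg}

/-- The rotation homotopy: at `u = 0` this is `ι(ε)`, at `u = 1` it is `κ(ε) ∘ Σπ` precomposed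
with the reversal of `ΣD`. -/
def rotationHom (π : D ⟶ A) (u : I) : suspObj D ⟶ coneObj (coneEpsHom π) :=
  ⟨{ toFun g := ⟨(g.1.comp (slideToOne.curry u),
        ⟨(postcompHom π.1 π.2 (g.1.comp ⟨fun t => u * σ t, by fun_prop⟩), g.1 u),
          (congrArg (fun t => π.1 (g.1 t)) (by simp)).trans
            ((congrArg π.1 (susp_apply_zero g)).trans (map_zero π.1)),
          congrArg (fun t => π.1 (g.1 t)) (by simp)⟩),
        (congrArg g.1 (by simp)).trans (susp_apply_one g), congrArg g.1 (by simp)⟩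
     map_smul' c g := Subtype.ext (Prod.ext rfl (Subtype.ext (Prod.ext
        (map_smul (postcompHom π.1 π.2) c (g.1.comp _)) rfl)))
     map_zero' := Subtype.ext (Prod.ext rfl (Subtype.ext (Prod.ext
        (map_zero (postcompHom π.1 π.2)) rfl)))
     map_add' g g' := Subtype.ext (Prod.ext rfl (Subtype.ext (Prod.ext
        (map_add (postcompHom π.1 π.2) (g.1.comp _) (g'.1.comp _)) rfl)))
     map_mul' g g' := Subtype.ext (Prod.ext rfl (Subtype.ext (Prod.ext
        (map_mul (postcompHom π.1 π.2) (g.1.comp _) (g'.1.comp _)) rfl))) },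
   by
    have := π.2
    refine Continuous.subtype_mk (Continuous.prodMk ?_ (Continuous.subtype_mk
      (Continuous.prodMk ?_ (by fun_prop)) _)) _
    · exact ContinuousMap.continuous_of_continuous_uncurry _ (by fun_prop)
    · refine ContinuousMap.continuous_of_continuous_uncurry _ ?_
      change Continuous fun p : (suspObj D).carrier × I => π.1 (p.1.1 (u * σ p.2))
      fun_prop⟩

lemma map_coneIotaHom_coneEpsHom {𝒞 : Type*} [Category 𝒞] {F : BanAlg ⥤ 𝒞}
    (hF : HomotopyInvariant F) (π : D ⟶ A) :
    F.map (coneIotaHom (coneEpsHom π)) = F.map ((suspReverse D).hom ≫ suspHom π ≫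
      coneKappaHom (coneIotaHom π) (coneEpsHom π) (isSemiSplitExtension_coneIota_coneEps π).1) := by
  have h0 : rotationHom π 0 = coneIotaHom (coneEpsHom π) := by
    ext g
    refine Subtype.ext (Prod.ext (ContinuousMap.ext fun t => congrArg g.1 (by simp)) ?_)
    refine Subtype.ext (Prod.ext (ContinuousMap.ext fun t => ?_) (susp_apply_zero g))
    exact (congrArg (fun t => π.1 (g.1 t)) (by simp)).trans
      ((congrArg π.1 (susp_apply_zero g)).trans (map_zero π.1))
  have h1 : rotationHom π 1 = (suspReverse D).hom ≫ suspHom π ≫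
      coneKappaHom (coneIotaHom π) (coneEpsHom π) (isSemiSplitExtension_coneIota_coneEps π).1 := by
    ext g
    refine Subtype.ext (Prod.ext (ContinuousMap.ext fun t => ?_) ?_)
    · exact (congrArg g.1 (by simp)).trans (susp_apply_one g)
    · exact Subtype.ext (Prod.ext (ContinuousMap.ext fun t => congrArg (fun t => π.1 (g.1 t))
        (by simp)) (susp_apply_one g))
  rw [← h0, ← h1]
  have := π.2
  refine hF.map_eq_of_family _ (Continuous.subtype_mk (Continuous.prodMk ?_
    (Continuous.subtype_mk (Continuous.prodMk ?_ (by fun_prop)) _)) _)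
  · refine ContinuousMap.continuous_of_continuous_uncurry _ ?_
    change Continuous fun p : ((suspObj D).carrier × I) × I => p.1.1.1 (slideToOne (p.1.2, p.2))
    fun_prop
  · refine ContinuousMap.continuous_of_continuous_uncurry _ ?_
    change Continuous fun p : ((suspObj D).carrier × I) × I => π.1 (p.1.1.1 (p.1.2 * σ p.2))
    fun_prop

end Rotation

section LongExactSequence

variable {𝒜 : Type*} [Category 𝒜] [Abelian 𝒜]

lemma CategoryTheory.ShortComplex.Exact.exists_exact_of_iso {S : ShortComplex 𝒜} (hS : S.Exact)
    {X₁ X₂ X₃ : 𝒜} (f : X₁ ⟶ X₂) (g : X₂ ⟶ X₃) (e₁ : S.X₁ ≅ X₁) (e₂ : S.X₂ ≅ X₂) (e₃ : S.X₃ ≅ X₃)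
    (comm₁₂ : e₁.hom ≫ f = S.f ≫ e₂.hom) (comm₂₃ : e₂.hom ≫ g = S.g ≫ e₃.hom) :
    ∃ w : f ≫ g = 0, (ShortComplex.mk f g w).Exact := by
  have w : f ≫ g = 0 := by
    rw [← e₁.inv_hom_id_assoc f, comm₁₂, Category.assoc, Category.assoc, comm₂₃, S.zero_assoc,
      Limits.zero_comp, Limits.comp_zero]
  exact ⟨w, ShortComplex.exact_of_iso
    (ShortComplex.isoMk (S₂ := .mk f g w) e₁ e₂ e₃ comm₁₂ comm₂₃) hS⟩

variable {F : BanAlg ⥤ 𝒜} {B D A : BanAlg} {i : B ⟶ D} {π : D ⟶ A}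

lemma exists_exact_connecting_map_comp (hhe : HalfExactOnSemiSplit F) (hext : IsExtensionHom i π)
    [IsIso (F.map (coneKappaHom i π hext))] :
    ∃ w : (F.map (coneIotaHom π) ≫ inv (F.map (coneKappaHom i π hext))) ≫ F.map i = 0,
      (ShortComplex.mk _ _ w).Exact := by
  obtain ⟨_, hex⟩ := hhe.exact (isSemiSplitExtension_coneIota_coneEps π)
  refine hex.exists_exact_of_iso _ _ (Iso.refl _) (asIso (F.map (coneKappaHom i π hext))).symm
    (Iso.refl _) (by simp) ?_
  simp only [Iso.symm_hom, asIso_inv, Iso.refl_hom, Category.comp_id, IsIso.inv_comp_eq]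
  rw [← F.map_comp, coneKappaHom_comp_coneEpsHom]

lemma exists_exact_comp_connecting_map (hhtp : HomotopyInvariant F) (hhe : HalfExactOnSemiSplit F)
    (hext : IsExtensionHom i π) [IsIso (F.map (coneKappaHom i π hext))] :
    ∃ w : F.map (suspHom π) ≫ (F.map (coneIotaHom π) ≫ inv (F.map (coneKappaHom i π hext))) = 0,
      (ShortComplex.mk _ _ w).Exact := by
  have hE := isSemiSplitExtension_coneIota_coneEps π
  have := isIso_map_coneKappaHom hhtp hhe hE.1 hE.2
  obtain ⟨_, hex⟩ := hhe.exact (isSemiSplitExtension_coneIota_coneEps (coneEpsHom π))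
  refine hex.exists_exact_of_iso _ _ (F.mapIso (suspReverse D))
    (asIso (F.map (coneKappaHom _ _ hE.1))).symm (asIso (F.map (coneKappaHom i π hext))).symm ?_ ?_
  · simp [map_coneIotaHom_coneEpsHom hhtp π]
  · simp only [Iso.symm_hom, asIso_inv, IsIso.inv_comp_eq]
    rw [← F.map_comp_assoc, coneKappaHom_comp_coneEpsHom]

end LongExactSequence

theorem long_exact_sequence_of_halfexact
    {𝒜 : Type*} [Category 𝒜] [Abelian 𝒜]
    (F : BanAlg ⥤ 𝒜)
    (hhtp : HomotopyInvariant F)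
    (hhe : ∀ (B D A : BanAlg) (i : B ⟶ D) (π : D ⟶ A), IsExtensionHom i π → IsSemiSplit π →
      ∃ w : F.map i ≫ F.map π = 0, (ShortComplex.mk (F.map i) (F.map π) w).Exact)
    (B D A : BanAlg) (i : B ⟶ D) (π : D ⟶ A)
    (hext : IsExtensionHom i π) (hss : IsSemiSplit π) :
    ∃ hκ : IsIso (F.map (coneKappaHom i π hext)),
      ∃ (w₁ : F.map (suspHom i) ≫ F.map (suspHom π) = 0)
        (w₂ : F.map (suspHom π) ≫
          (F.map (coneIotaHom π) ≫ @inv _ _ _ _ (F.map (coneKappaHom i π hext)) hκ) = 0)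
        (w₃ : (F.map (coneIotaHom π) ≫ @inv _ _ _ _ (F.map (coneKappaHom i π hext)) hκ) ≫
          F.map i = 0)
        (w₄ : F.map i ≫ F.map π = 0),
        (ShortComplex.mk _ _ w₁).Exact ∧ (ShortComplex.mk _ _ w₂).Exact ∧
        (ShortComplex.mk _ _ w₃).Exact ∧ (ShortComplex.mk _ _ w₄).Exact := by
  have hκ := isIso_map_coneKappaHom hhtp hhe hext hss
  obtain ⟨w₁, h₁⟩ := HalfExactOnSemiSplit.exact hhe (IsSemiSplitExtension.susp ⟨hext, hss⟩)
  obtain ⟨w₂, h₂⟩ := exists_exact_comp_connecting_map hhtp hhe hext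
  obtain ⟨w₃, h₃⟩ := exists_exact_connecting_map_comp hhe hext
  obtain ⟨w₄, h₄⟩ := hhe B D A i π hext hss
  exact ⟨hκ, w₁, w₂, w₃, w₄, h₁, h₂, h₃, h₄⟩
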